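/- Let N be a Novikov algebra over a field K. For all a,b,x_1,...,x_t in N with t ≥ 1, one has a(bx_1⋯x_t) = (ab)x_1x_2⋯x_t − Σ_{i=1}^{t} (a,b,x_i)x_1⋯x_{i−1}x_{i+1}⋯x_t, where all iterated products are right-normed. -/

import Mathlib

/-! Moving `a` into `b x₁ ⋯ x_t` one factor at a time, `a(yx) = (ay)x - (a, y, x)`, produces the
associators `(a, b x₁ ⋯ x_{i-1}, x_i) x_{i+1} ⋯ x_t`. Left symmetry and right commutativity give
`(a, bx, y) = (a, b, y)x`, so each of them equals `(a, b, x_i) x₁ ⋯ x_{i-1} x_{i+1} ⋯ x_t`. -/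

namespace Stmt1

/-- The associator `(x,y,z) = (xy)z - x(yz)`. -/
def assoc {N : Type*} [NonUnitalNonAssocRing N] (x y z : N) : N := (x*y)*z - x*(y*z)

/-- The right-normed product `a x₁ x₂ ⋯ xₖ = (…((a x₁) x₂)…) xₖ`. -/
def rprod {N : Type*} [NonUnitalNonAssocRing N] (a : N) : List N → N
  | [] => a
  | x :: xs => rprod (a * x) xs

section

variable {N : Type*} [NonUnitalNonAssocRing N]

theorem rprod_sub (c d : N) (l : List N) : rprod (c - d) l = rprod c l - rprod d l := by
  induction l generalizing c d with
  | nil => rfl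
  | cons x xs ih => simp only [rprod, sub_mul, ih]

theorem mul_mul_eq_sub_assoc (a b c : N) : a * (b * c) = a * b * c - assoc a b c := by
  rw [assoc, sub_sub_cancel]

theorem assoc_mul_middle (hls : ∀ x y z : N, assoc x y z = assoc y x z)
    (hrc : ∀ x y z : N, (x*y)*z = (x*z)*y) (a b x y : N) :
    assoc a (b * x) y = assoc a b y * x := by
  rw [hls, hls a]
  simp only [assoc, sub_mul]
  rw [hrc b x a, hrc (b * a) x y, hrc b x (a * y)]

theorem mul_rprod (hls : ∀ x y z : N, assoc x y z = assoc y x z)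
    (hrc : ∀ x y z : N, (x*y)*z = (x*z)*y) (a b : N) (l : List N) :
    a * rprod b l = rprod (a * b) l - ∑ i : Fin l.length, rprod (assoc a b l[i]) (l.eraseIdx i) := by
  induction l generalizing b with
  | nil => simp [rprod]
  | cons x xs ih =>
    calc a * rprod b (x :: xs) = a * rprod (b * x) xs := rfl
      _ = rprod (a * b * x) xs - rprod (assoc a b x) xs
          - ∑ i : Fin xs.length, rprod (assoc a b xs[i] * x) (xs.eraseIdx i) := by
        simp only [ih, mul_mul_eq_sub_assoc a b x, rprod_sub, assoc_mul_middle hls hrc]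
      _ = _ := by
        simp only [List.length_cons, Fin.sum_univ_succ, rprod, sub_sub]
        rfl

end

theorem left_mul_formula_general (N : Type*) [NonUnitalNonAssocRing N]
    (hls : ∀ x y z : N, assoc x y z = assoc y x z)
    (hrc : ∀ x y z : N, (x*y)*z = (x*z)*y)
    (t : ℕ) (a b : N) (x : Fin t → N) :
    a * rprod b (List.ofFn x) =
      rprod (a*b) (List.ofFn x)
        - ∑ i : Fin t, rprod (assoc a b (x i)) ((List.ofFn x).eraseIdx i) := by
  rw [mul_rprod hls hrc, ← Fin.sum_congr' _ (List.length_ofFn (f := x))]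
  simp [Fin.cast]

/-- In any Novikov algebra `N` over a field `K`, for `t ≥ 1`,
`a(bx₁⋯x_t) = (ab)x₁⋯x_t − Σᵢ (a,b,xᵢ)x₁⋯x_{i−1}x_{i+1}⋯x_t`. -/
theorem left_mul_formula (K N : Type*) [Field K] [NonUnitalNonAssocRing N] [Module K N]
    [SMulCommClass K N N] [IsScalarTower K N N]
    (hls : ∀ x y z : N, assoc x y z = assoc y x z)
    (hrc : ∀ x y z : N, (x*y)*z = (x*z)*y)
    (t : ℕ) (ht : 1 ≤ t) (a b : N) (x : Fin t → N) :
    a * rprod b (List.ofFn x) =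
      rprod (a*b) (List.ofFn x)
        - ∑ i : Fin t, rprod (assoc a b (x i)) ((List.ofFn x).eraseIdx i) :=
  left_mul_formula_general N hls hrc t a b x

end Stmt1
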